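/- arXiv:2605.03835 — 6 statements merged into one kernel-verified Lean document; each statement's English description precedes it below -/
import Mathlib

section
/- Let $\tau$ be a rational polyhedral cone with lattice $N_\tau$ and dual monoid $\tau^{\vee}\subseteq M_\tau$, let $M$ be a lattice, and let $Q_\tau : M\times M \to M_\tau$ be a symmetric bilinear form with $Q_\tau(m,m)\in\tau^{\vee}$ for all $m$. Let $\phi: M \to M_\tau$ be a group homomorphism such that for every $n \in \tau\cap N_\tau$, the element $\phi^{\vee}(n) \in N := \mathrm{Hom}(M,\mathbb{Z})$ lies in the $\mathbb{Q}$-span of $\{Q_{\tau,\mathrm{hom},N}(m)(n): m \in M\}$. Then for every $m \in M$ there exist $m_1, m_2 \in M$ such that $\phi(m) - Q_\tau(m_1,m) \in \tau^{\vee}$ and $Q_\tau(m_2,m) - \phi(m) \in \tau^{\vee}$. -/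
/-!
Positivity of `Q` means that `x ↦ Q x x n` is a positive semi-definite integral quadratic form
for every `n ∈ τ`, so every `m` with `Q m m n = 0` lies in the radical of `Q (·) (·) n`; the span
hypothesis then forces `φ m n = 0` as well. Hence on each of the finitely many generators `g i`
of `τ` the value `φ m (g i)` is bounded in absolute value by `c * Q m m (g i)` for a single
integer `c`, and `m₁ = -(c • m)`, `m₂ = c • m` work, first on the generators and then on all of
`τ ∩ Nτ` by additivity.
-/

lemma LinearMap.apply_eq_zero_of_apply_self_eq_zero {M : Type*} [AddCommGroup M]
    (B : M →ₗ[ℤ] M →ₗ[ℤ] ℤ) (hsymm : ∀ x y, B x y = B y x) (hpos : ∀ x, 0 ≤ B x x)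
    {m : M} (hm : B m m = 0) (w : M) : B w m = 0 := by
  by_contra hw
  have hsq : 1 ≤ B w m ^ 2 := (one_le_sq_iff_one_le_abs _).mpr (Int.one_le_abs hw)
  -- `B (w + t • m) (w + t • m) = B w w + 2 * t * B w m` is negative for this `t`
  have := hpos (w + (-(B w w + 1) * B w m) • m)
  simp only [map_add, map_smul, LinearMap.add_apply, LinearMap.smul_apply, smul_eq_mul, hm,
    hsymm m w] at this
  nlinarith [hpos w]

lemma LinearMap.apply_eq_zero_of_smul_mem_span_range {M : Type*} [AddCommGroup M]
    (B : M →ₗ[ℤ] M →ₗ[ℤ] ℤ) (hsymm : ∀ x y, B x y = B y x) (hpos : ∀ x, 0 ≤ B x x)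
    {f : Module.Dual ℤ M} {k : ℤ} (hk : k ≠ 0) (hf : k • f ∈ Submodule.span ℤ (Set.range B))
    {m : M} (hm : B m m = 0) : f m = 0 := by
  have hrange : Submodule.span ℤ (Set.range B) ≤ LinearMap.range B :=
    Submodule.span_le.mpr (Set.range_subset_iff.mpr (LinearMap.mem_range_self B))
  obtain ⟨w, hw⟩ := hrange hf
  have hwm : k * f m = B w m := by
    rw [hw]
    rfl
  rw [B.apply_eq_zero_of_apply_self_eq_zero hsymm hpos hm w] at hwm
  exact (mul_eq_zero.mp hwm).resolve_left hk

lemma exists_forall_abs_le_mul {ι : Type*} [Fintype ι] (a b : ι → ℤ) (hb : ∀ i, 0 ≤ b i)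
    (hab : ∀ i, b i = 0 → a i = 0) : ∃ c : ℤ, ∀ i, |a i| ≤ c * b i := by
  refine ⟨∑ j, |a j|, fun i => ?_⟩
  rcases (hb i).eq_or_lt with hbi | hbi
  · simp [hab i hbi.symm, ← hbi]
  · calc |a i| ≤ ∑ j, |a j| :=
          Finset.single_le_sum (fun j _ => abs_nonneg (a j)) (Finset.mem_univ i)
      _ ≤ (∑ j, |a j|) * b i :=
          le_mul_of_one_le_right (Finset.sum_nonneg fun j _ => abs_nonneg (a j)) hbi

lemma Module.Dual.le_of_smul_mem_closure {N : Type*} [AddCommGroup N] {s : Set N}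
    {F G : Module.Dual ℤ N} (h : ∀ x ∈ s, F x ≤ G x) {n : N} {k : ℕ} (hk : 0 < k)
    (hn : (k : ℤ) • n ∈ AddSubmonoid.closure s) : F n ≤ G n := by
  have hcl : ∀ x ∈ AddSubmonoid.closure s, F x ≤ G x := by
    intro x hx
    induction hx using AddSubmonoid.closure_induction with
    | mem y hy => exact h y hy
    | zero => simp
    | add x y _ _ hx hy => simpa only [map_add] using add_le_add hx hy
  have hkn := hcl _ hn
  simp only [map_zsmul, smul_eq_mul] at hkn
  exact le_of_mul_le_mul_left hkn (by exact_mod_cast hk)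

/-- Let `τ` be a rational polyhedral cone in the lattice `Nτ` (encoded by
a finite set of generators `g`, with `τset = τ ∩ Nτ` the saturation of the monoid they
generate), `M` a lattice, and `Qτ : M × M → Mτ = Hom(Nτ,ℤ)` a symmetric bilinear form
with `Qτ(m,m) ∈ τ^∨` for all `m`.  Let `φ : M → Mτ` be a homomorphism such that for
every `n ∈ τ ∩ Nτ`, the dual element `φ^∨(n) ∈ N = Hom(M,ℤ)` lies in the `ℚ`-span of
`{Q_{τ,hom,N}(m)(n) : m ∈ M}`.  Then for every `m ∈ M` there exist `m₁, m₂ ∈ M` with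
`Qτ(m₁,m) ≤ φ(m) ≤ Qτ(m₂,m)` in the order given by `τ^∨` (i.e. the differences are
nonnegative on `τ ∩ Nτ`). -/
theorem trop_abelian_boundedness
    {M Nτ : Type*} [AddCommGroup M] [AddCommGroup Nτ]
    {r : ℕ} (g : Fin r → Nτ)
    (τset : Set Nτ)
    (hτ : τset = {n : Nτ | ∃ k : ℕ, 0 < k ∧
      (k : ℤ) • n ∈ AddSubmonoid.closure (Set.range g)})
    (Q : M →ₗ[ℤ] M →ₗ[ℤ] Module.Dual ℤ Nτ)
    (hsymm : ∀ m m' : M, Q m m' = Q m' m)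
    (hQpos : ∀ m : M, ∀ n ∈ τset, 0 ≤ Q m m n)
    (φ : M →ₗ[ℤ] Module.Dual ℤ Nτ)
    (hspan : ∀ n ∈ τset, ∃ k : ℤ, k ≠ 0 ∧
      k • φ.flip n ∈ Submodule.span ℤ (Set.range fun m : M => (Q m).flip n)) :
    ∀ m : M, ∃ m1 m2 : M,
      (∀ n ∈ τset, Q m1 m n ≤ φ m n) ∧ (∀ n ∈ τset, φ m n ≤ Q m2 m n) := by
  intro m
  have hg : ∀ i, g i ∈ τset := fun i => hτ ▸
    ⟨1, one_pos, by simpa using AddSubmonoid.subset_closure (Set.mem_range_self i)⟩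
  have hvanish : ∀ i, Q m m (g i) = 0 → φ m (g i) = 0 := fun i hm => by
    obtain ⟨k, hk, hmem⟩ := hspan (g i) (hg i)
    exact (Q.compr₂ (LinearMap.applyₗ (g i))).apply_eq_zero_of_smul_mem_span_range
      (fun x y => by simp [hsymm x y]) (fun x => hQpos x (g i) (hg i)) hk hmem hm
  obtain ⟨c, hc⟩ := exists_forall_abs_le_mul (fun i => φ m (g i)) (fun i => Q m m (g i))
    (fun i => hQpos m (g i) (hg i)) hvanish
  have hsat : ∀ F G : Module.Dual ℤ Nτ, (∀ i, F (g i) ≤ G (g i)) → ∀ n ∈ τset, F n ≤ G n := by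
    rintro F G hFG n hn
    obtain ⟨k, hk, hkn⟩ := hτ ▸ hn
    exact Module.Dual.le_of_smul_mem_closure (Set.forall_mem_range.mpr hFG) hk hkn
  refine ⟨-(c • m), c • m, hsat _ _ fun i => ?_, hsat _ _ fun i => ?_⟩ <;>
  · simp only [map_neg, map_smul, LinearMap.neg_apply, LinearMap.smul_apply, smul_eq_mul]
    linarith [abs_le.mp (hc i)]
end

section
/- Let $N$ be a lattice of rank $r$ and $G$ a finite group acting on $N$ by lattice automorphisms. Let $S = \{g \cdot e_i : g \in G,\ 1 \le i \le r\}$ where $e_1,\dots,e_r$ is a basis of $N$. Then the fan obtained by subdividing $N_{\mathbb{R}}$ along the hyperplanes orthogonal to the elements of $S$ (i.e., whose maximal cones are the closures of the connected components of $N_{\mathbb{R}} \setminus \bigcup_{x \in S} x^{\perp}$) is a complete $G$-invariant fan in $N_{\mathbb{R}}$. -/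
/-!
Every vector `v` lies in the closed chamber of `v + t • w` for a vector `w` off all the hyperplanes
and `t > 0` small: the hyperplanes containing `v` are then avoided thanks to `w`, while the signs of
`⟪x, v⟫ ≠ 0` do not change. Invariance holds because each `ρ g` is an isometry permuting `S`, so it
carries the chamber of `p` onto the chamber of `ρ g p`.
-/

open Filter Topology
open scoped RealInnerProductSpace

section Hyperplanes

variable {E : Type*} [NormedAddCommGroup E] [InnerProductSpace ℝ E]

def AvoidsHyperplanes (S : Set E) (p : E) : Prop :=
  ∀ x ∈ S, ⟪x, p⟫ ≠ 0

/-- For generic `p`, the closure of the chamber of the arrangement `{xᗮ | x ∈ S}` containing `p`. -/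
def hyperplaneCone (S : Set E) (p : E) : Set E :=
  {v | ∀ x ∈ S, (0 < ⟪x, p⟫ → 0 ≤ ⟪x, v⟫) ∧ (⟪x, p⟫ < 0 → ⟪x, v⟫ ≤ 0)}

lemma exists_avoidsHyperplanes {S : Set E} (hfin : S.Finite) (h0 : (0 : E) ∉ S) :
    ∃ w, AvoidsHyperplanes S w := by
  classical
  have htop : ⊤ ∉ hfin.toFinset.image fun x => (ℝ ∙ x)ᗮ := by
    simp only [Finset.mem_image, Set.Finite.mem_toFinset, not_exists, not_and]
    intro x hx hperp
    have hxx : ⟪x, x⟫ = 0 :=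
      Submodule.mem_orthogonal_singleton_iff_inner_right.1 (hperp ▸ Submodule.mem_top)
    exact h0 (inner_self_eq_zero.1 hxx ▸ hx)
  obtain ⟨w, hw⟩ := (Set.ne_univ_iff_exists_notMem _).1 (Subspace.biUnion_ne_univ_of_top_notMem htop)
  refine ⟨w, fun x hx hxw => hw ?_⟩
  exact Set.mem_biUnion (Finset.mem_image_of_mem _ (hfin.mem_toFinset.2 hx))
    (Submodule.mem_orthogonal_singleton_iff_inner_right.2 hxw)

lemma eventually_add_mul_sign (a b : ℝ) (hb : b ≠ 0) :
    ∀ᶠ t in 𝓝[>] 0, a + t * b ≠ 0 ∧ (0 < a + t * b → 0 ≤ a) ∧ (a + t * b < 0 → a ≤ 0) := by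
  have hlim : Tendsto (fun t => a + t * b) (𝓝[>] 0) (𝓝 a) :=
    ((continuous_const.add (continuous_id.mul continuous_const)).tendsto' 0 a
      (by simp)).mono_left nhdsWithin_le_nhds
  rcases lt_trichotomy a 0 with ha | rfl | ha
  · filter_upwards [hlim.eventually (eventually_lt_nhds ha)] with t ht
    exact ⟨ht.ne, fun h => absurd ht h.not_gt, fun _ => ha.le⟩
  · filter_upwards [self_mem_nhdsWithin] with t (ht : 0 < t)
    simp [ht.ne', hb]
  · filter_upwards [hlim.eventually (eventually_gt_nhds ha)] with t ht
    exact ⟨ht.ne', fun _ => ha.le, fun h => absurd ht h.not_gt⟩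

lemma eventually_avoidsHyperplanes_mem_hyperplaneCone {S : Set E} (hfin : S.Finite) (v : E)
    {w : E} (hw : AvoidsHyperplanes S w) :
    ∀ᶠ t in 𝓝[>] (0 : ℝ), AvoidsHyperplanes S (v + t • w) ∧ v ∈ hyperplaneCone S (v + t • w) := by
  have hx : ∀ x ∈ S, ∀ᶠ t in 𝓝[>] (0 : ℝ), ⟪x, v + t • w⟫ ≠ 0 ∧
      (0 < ⟪x, v + t • w⟫ → 0 ≤ ⟪x, v⟫) ∧ (⟪x, v + t • w⟫ < 0 → ⟪x, v⟫ ≤ 0) := by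
    intro x hxS
    simpa only [inner_add_right, real_inner_smul_right] using
      eventually_add_mul_sign ⟪x, v⟫ ⟪x, w⟫ (hw x hxS)
  filter_upwards [hfin.eventually_all.2 hx] with t ht
  exact ⟨fun x hxS => (ht x hxS).1, fun x hxS => (ht x hxS).2⟩

lemma exists_avoidsHyperplanes_mem_hyperplaneCone {S : Set E} (hfin : S.Finite)
    (h0 : (0 : E) ∉ S) (v : E) : ∃ p, AvoidsHyperplanes S p ∧ v ∈ hyperplaneCone S p := by
  obtain ⟨w, hw⟩ := exists_avoidsHyperplanes hfin h0
  obtain ⟨t, ht⟩ := (eventually_avoidsHyperplanes_mem_hyperplaneCone hfin v hw).exists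
  exact ⟨v + t • w, ht⟩

section Isometry

variable {S : Set E} {e : E ≃ₗᵢ[ℝ] E}

lemma avoidsHyperplanes_map_iff (he : e '' S = S) (p : E) :
    AvoidsHyperplanes S (e p) ↔ AvoidsHyperplanes S p := by
  conv_lhs => rw [AvoidsHyperplanes, ← he]
  simp only [Set.forall_mem_image, LinearIsometryEquiv.inner_map_map, AvoidsHyperplanes]

lemma preimage_hyperplaneCone_map (he : e '' S = S) (p : E) :
    e ⁻¹' hyperplaneCone S (e p) = hyperplaneCone S p := by
  ext v
  conv_lhs => rw [Set.mem_preimage, hyperplaneCone, Set.mem_ofPred_eq, ← he]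
  simp only [Set.forall_mem_image, LinearIsometryEquiv.inner_map_map, hyperplaneCone,
    Set.mem_ofPred_eq]

lemma image_hyperplaneCone (he : e '' S = S) (p : E) :
    e '' hyperplaneCone S p = hyperplaneCone S (e p) := by
  rw [← preimage_hyperplaneCone_map he, Set.image_preimage_eq _ e.surjective]

end Isometry

section Orbit

variable {G ι : Type*} [Group G] (ρ : G →* (E ≃ₗᵢ[ℝ] E)) (b : ι → E)

lemma finite_setOf_exists_eq_map [Finite G] [Finite ι] :
    {v | ∃ (g : G) (i : ι), v = ρ g (b i)}.Finite :=
  (Set.finite_range fun gi : G × ι => ρ gi.1 (b gi.2)).subset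
    (by rintro _ ⟨g, i, rfl⟩; exact ⟨(g, i), rfl⟩)

lemma image_setOf_exists_eq_map (g : G) :
    ρ g '' {v | ∃ (h : G) (i : ι), v = ρ h (b i)} = {v | ∃ (h : G) (i : ι), v = ρ h (b i)} := by
  ext v
  constructor
  · rintro ⟨_, ⟨h, i, rfl⟩, rfl⟩
    exact ⟨g * h, i, by rw [map_mul]; rfl⟩
  · rintro ⟨h, i, rfl⟩
    refine ⟨ρ (g⁻¹ * h) (b i), ⟨g⁻¹ * h, i, rfl⟩, ?_⟩
    rw [← Function.comp_apply (f := ρ g), ← LinearIsometryEquiv.coe_mul, ← map_mul,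
      mul_inv_cancel_left]

lemma zero_notMem_setOf_exists_eq_map {b : ι → E} (hb : ∀ i, b i ≠ 0) :
    (0 : E) ∉ {v | ∃ (g : G) (i : ι), v = ρ g (b i)} := by
  rintro ⟨g, i, h⟩
  exact hb i ((ρ g).map_eq_zero_iff.1 h.symm)

end Orbit

end Hyperplanes

theorem hyperplane_fan_complete_invariant_general
    (r : ℕ) (G : Type*) [Group G] [Finite G]
    (ρ : G →* (EuclideanSpace ℝ (Fin r) ≃ₗᵢ[ℝ] EuclideanSpace ℝ (Fin r)))
    (S : Set (EuclideanSpace ℝ (Fin r)))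
    (hS : S = {v | ∃ (g : G) (i : Fin r), v = ρ g (EuclideanSpace.single i (1 : ℝ))})
    (C : EuclideanSpace ℝ (Fin r) → Set (EuclideanSpace ℝ (Fin r)))
    (hC : ∀ p, C p = {v | ∀ x ∈ S,
      (0 < (inner ℝ x p : ℝ) → 0 ≤ (inner ℝ x v : ℝ)) ∧
      ((inner ℝ x p : ℝ) < 0 → (inner ℝ x v : ℝ) ≤ 0)}) :
    (∀ v, ∃ p, (∀ x ∈ S, (inner ℝ x p : ℝ) ≠ 0) ∧ v ∈ C p) ∧
    (∀ (g : G) (p : EuclideanSpace ℝ (Fin r)), (∀ x ∈ S, (inner ℝ x p : ℝ) ≠ 0) →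
      ∃ q, (∀ x ∈ S, (inner ℝ x q : ℝ) ≠ 0) ∧ (ρ g) '' (C p) = C q) := by
  obtain rfl : C = hyperplaneCone S := funext hC
  have hfin : S.Finite := hS ▸ finite_setOf_exists_eq_map ρ _
  have h0 : (0 : EuclideanSpace ℝ (Fin r)) ∉ S :=
    hS ▸ zero_notMem_setOf_exists_eq_map ρ fun i => by simp
  have hinv : ∀ g, ρ g '' S = S := fun g => hS ▸ image_setOf_exists_eq_map ρ _ g
  exact ⟨exists_avoidsHyperplanes_mem_hyperplaneCone hfin h0, fun g p hp =>
    ⟨ρ g p, (avoidsHyperplanes_map_iff (hinv g) p).2 hp, image_hyperplaneCone (hinv g) p⟩⟩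

/-- Let `G` be a finite group acting on the lattice `N = ℤ^r` by lattice
automorphisms which are isometries for a `G`-invariant inner product on `N_ℝ = ℝ^r`.
Let `S = {g · eᵢ}` be the orbit of a basis.  Then the fan obtained by subdividing
`N_ℝ` along the hyperplanes orthogonal to the elements of `S` — whose maximal cones are
the closures `C p` of the connected components of the complement, indexed by generic
points `p` — is complete (every vector lies in some maximal cone) and `G`-invariant
(each `g` maps maximal cones to maximal cones). -/
theorem hyperplane_fan_complete_invariant
    (r : ℕ) (G : Type*) [Group G] [Finite G]
    (ρ : G →* (EuclideanSpace ℝ (Fin r) ≃ₗᵢ[ℝ] EuclideanSpace ℝ (Fin r)))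
    (L : AddSubgroup (EuclideanSpace ℝ (Fin r)))
    (hL : L = AddSubgroup.closure
      (Set.range fun i : Fin r => EuclideanSpace.single i (1 : ℝ)))
    (hlat : ∀ g : G, ∀ v ∈ L, ρ g v ∈ L)
    (S : Set (EuclideanSpace ℝ (Fin r)))
    (hS : S = {v | ∃ (g : G) (i : Fin r), v = ρ g (EuclideanSpace.single i (1 : ℝ))})
    (C : EuclideanSpace ℝ (Fin r) → Set (EuclideanSpace ℝ (Fin r)))
    (hC : ∀ p, C p = {v | ∀ x ∈ S,
      (0 < (inner ℝ x p : ℝ) → 0 ≤ (inner ℝ x v : ℝ)) ∧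
      ((inner ℝ x p : ℝ) < 0 → (inner ℝ x v : ℝ) ≤ 0)}) :
    (∀ v, ∃ p, (∀ x ∈ S, (inner ℝ x p : ℝ) ≠ 0) ∧ v ∈ C p) ∧
    (∀ (g : G) (p : EuclideanSpace ℝ (Fin r)), (∀ x ∈ S, (inner ℝ x p : ℝ) ≠ 0) →
      ∃ q, (∀ x ∈ S, (inner ℝ x q : ℝ) ≠ 0) ∧ (ρ g) '' (C p) = C q) :=
  hyperplane_fan_complete_invariant_general r G ρ S hS C hC
end

section
/- Let $\sigma$ be a rational polyhedral cone in $N_{\mathbb{R}}$ which is not equal to $\{0\}$, let $b$ denote its barycenter (e.g., the sum of the primitive generators of its rays) and $\rho = \mathbb{R}_{\ge 0} b$. Let $\Delta_{\partial}$ be a fan subdividing the boundary $\partial\sigma$ (union of proper faces of $\sigma$). Then the collection of cones consisting of (i) the cones of $\Delta_{\partial}$ and (ii) the cones $\mathrm{Conv}(\rho, \tau) = \rho + \tau$ for $\tau \in \Delta_{\partial}$, forms a fan which is a subdivision of $\sigma$ (its support equals $\sigma$). -/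
/-!
Equip `V` with any inner product. A finitely generated salient cone is closed, being the cone over
the convex hull of its nonzero generators, a compact set avoiding `0`; so `σ` equals its double
dual. For `x ∈ σ`, minimise `⟪x, u⟫ / ⟪b, u⟫` over the compact set of unit normals `u ∈ span σ`
of supporting hyperplanes of `σ`; the denominator is positive because `b` is relatively interior.
If the minimum `t` is attained at `u₀`, then `x - t • b` pairs nonnegatively with every normal,
hence lies in `σ`, and is annihilated by `u₀`, hence lies in `∂σ`, i.e. in some `τ ∈ Δ∂`.
-/

open Set Pointwise
open scoped RealInnerProductSpace

theorem isClosed_Ici_smul_of_isCompact {E : Type*} [NormedAddCommGroup E] [NormedSpace ℝ E]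
    {K : Set E} (hK : IsCompact K) (h0 : (0 : E) ∉ K) :
    IsClosed (Ici (0 : ℝ) • K) := by
  obtain ⟨ε, hε, hball⟩ := Metric.isOpen_iff.mp hK.isClosed.isOpen_compl 0 h0
  have hεK : ∀ k ∈ K, ε ≤ ‖k‖ := fun k hk => by
    by_contra! h
    exact hball (mem_ball_zero_iff.mpr h) hk
  refine isClosed_of_closure_subset fun p hp => ?_
  set R := ‖p‖ + 1
  -- near `p` only scalars up to `R / ε` occur, so there the cone agrees with a compact set
  have hbounded : Metric.ball p 1 ∩ Ici (0 : ℝ) • K ⊆ Icc 0 (R / ε) • K := by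
    rintro _ ⟨hdist, t, ht, k, hk, rfl⟩
    refine ⟨t, ⟨ht, ?_⟩, k, hk, rfl⟩
    rw [Metric.mem_ball, dist_eq_norm] at hdist
    rw [le_div_iff₀ hε]
    calc t * ε ≤ ‖t • k‖ := by
          rw [norm_smul, Real.norm_of_nonneg ht]; exact mul_le_mul_of_nonneg_left (hεK k hk) ht
      _ ≤ R := by linarith [norm_le_norm_add_norm_sub' (t • k) p]
  have hcompact : IsCompact (Icc 0 (R / ε) • K) := isCompact_Icc.smul_set hK
  have := Metric.isOpen_ball.inter_closure ⟨Metric.mem_ball_self one_pos, hp⟩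
  exact smul_subset_smul_right Icc_subset_Ici_self
    (hcompact.isClosed.closure_subset_iff.mpr hbounded this)

namespace PointedCone

section Module

variable {E : Type*} [AddCommGroup E] [Module ℝ E]

theorem coe_hull_finset (s : Finset E) :
    (hull ℝ (s : Set E) : Set E) = {x | ∃ c : E → ℝ, (∀ v, 0 ≤ c v) ∧ x = ∑ v ∈ s, c v • v} := by
  ext x
  constructor
  · intro hx
    obtain ⟨f, -, rfl⟩ := Submodule.mem_span_finset.mp hx
    exact ⟨fun v => f v, fun v => (f v).2, rfl⟩
  · rintro ⟨c, hc, rfl⟩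
    exact Submodule.sum_mem _ fun v hv => (hull ℝ (s : Set E)).smul_mem (hc v) (subset_hull hv)

theorem coe_hull_eq_insert_Ici_smul_convexHull (s : Set E) :
    (hull ℝ s : Set E) = insert 0 (Ici (0 : ℝ) • convexHull ℝ s) := by
  refine Subset.antisymm (fun x hx => ?_) ?_
  · induction hx using Submodule.span_induction with
    | mem x hx =>
      exact Or.inr ⟨1, mem_Ici.mpr zero_le_one, x, subset_convexHull ℝ s hx, one_smul ℝ x⟩
    | zero => exact Or.inl rfl
    | add x y _ _ hx hy =>
      rcases hx with rfl | ⟨a, ha, x, hx, rfl⟩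
      · simpa using hy
      rcases hy with rfl | ⟨b, hb, y, hy, rfl⟩
      · simpa using Or.inr ⟨a, ha, x, hx, rfl⟩
      have : a • x + b • y ∈ (a + b) • convexHull ℝ s := by
        rw [(convex_convexHull ℝ s).add_smul ha hb]
        exact add_mem_add (smul_mem_smul_set hx) (smul_mem_smul_set hy)
      exact Or.inr (smul_set_subset_smul (mem_Ici.mpr (add_nonneg ha hb)) this)
    | smul r x _ hx =>
      rcases hx with rfl | ⟨a, ha, x, hx, rfl⟩
      · simp
      exact Or.inr ⟨r * a, mul_nonneg r.2 ha, x, hx, (mul_smul (r : ℝ) a x).trans rfl⟩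
  · rintro _ (rfl | ⟨a, ha, x, hx, rfl⟩)
    · exact zero_mem _
    · exact (hull ℝ s).smul_mem ha (convexHull_min subset_hull (hull ℝ s).convex hx)

theorem zero_notMem_convexHull {s : Finset E} (h0 : (0 : E) ∉ s)
    (hsal : ∀ x ∈ hull ℝ (s : Set E), -x ∈ hull ℝ (s : Set E) → x = 0) :
    (0 : E) ∉ convexHull ℝ (s : Set E) := by
  classical
  intro hmem
  obtain ⟨w, hw, hsum, hzero⟩ := Finset.mem_convexHull'.mp hmem
  obtain ⟨v, hv, hwv⟩ := Finset.exists_ne_zero_of_sum_ne_zero (hsum ▸ one_ne_zero)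
  have hmem : ∀ t ⊆ s, ∑ y ∈ t, w y • y ∈ hull ℝ (s : Set E) := fun t hts =>
    Submodule.sum_mem _ fun y hy => (hull ℝ (s : Set E)).smul_mem (hw y (hts hy))
      (subset_hull (hts hy))
  have hneg : -(w v • v) = ∑ y ∈ s.erase v, w y • y := by
    rw [← Finset.add_sum_erase s _ hv] at hzero
    exact neg_eq_of_add_eq_zero_right hzero
  have hvmem : w v • v ∈ hull ℝ (s : Set E) := by simpa using hmem {v} (by simpa using hv)
  rcases smul_eq_zero.mp (hsal _ hvmem (hneg ▸ hmem _ (s.erase_subset v))) with h | h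
  exacts [hwv h, h0 (h ▸ hv)]

end Module

theorem isClosed_hull_finset {E : Type*} [NormedAddCommGroup E] [NormedSpace ℝ E]
    (s : Finset E) (hsal : ∀ x ∈ hull ℝ (s : Set E), -x ∈ hull ℝ (s : Set E) → x = 0) :
    IsClosed (hull ℝ (s : Set E) : Set E) := by
  classical
  have herase : hull ℝ ((s.erase 0 : Finset E) : Set E) = hull ℝ (s : Set E) := by
    rw [Finset.coe_erase]; exact Submodule.span_sdiff_singleton_zero
  rw [← herase, coe_hull_eq_insert_Ici_smul_convexHull, insert_eq]
  exact isClosed_singleton.union <| isClosed_Ici_smul_of_isCompact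
    ((s.erase 0).finite_toSet.isCompact_convexHull ℝ)
    (zero_notMem_convexHull (s.notMem_erase 0) (herase ▸ hsal))

end PointedCone

namespace ProperCone

variable {H : Type*} [NormedAddCommGroup H] [InnerProductSpace ℝ H] [FiniteDimensional ℝ H]
  (C : ProperCone ℝ H)

/-- Taking the normals inside `span C` makes them compact and keeps each of them nonzero on `C`. -/
def unitNormals : Set H :=
  (Submodule.span ℝ (C : Set H) : Set H) ∩ innerDual (C : Set H) ∩ Metric.sphere 0 1

variable {C}

theorem isCompact_unitNormals : IsCompact (unitNormals C) :=
  (isCompact_sphere 0 1).inter_left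
    ((Submodule.closed_of_finiteDimensional _).inter (innerDual (C : Set H)).isClosed)

theorem inv_norm_smul_mem_unitNormals {u : H} (hspan : u ∈ Submodule.span ℝ (C : Set H))
    (hdual : u ∈ innerDual (C : Set H)) (hu : u ≠ 0) : ‖u‖⁻¹ • u ∈ unitNormals C :=
  ⟨⟨Submodule.smul_mem _ _ hspan, (innerDual (C : Set H)).smul_mem hdual (by positivity)⟩,
    by simp [norm_smul, hu]⟩

theorem exists_inner_pos_of_mem_unitNormals {u : H} (hu : u ∈ unitNormals C) :
    ∃ z ∈ C, 0 < ⟪z, u⟫ := by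
  obtain ⟨⟨hspan, hdual⟩, hnorm⟩ := hu
  by_contra! hle
  have hker : Submodule.span ℝ (C : Set H) ≤ LinearMap.ker (innerₗ H u) :=
    Submodule.span_le.mpr fun z hz => by
      simpa [real_inner_comm] using le_antisymm (hle z hz) (hdual hz)
  have : u = 0 := by simpa using hker hspan
  simp [this] at hnorm

theorem inner_starProjection_span {z : H} (hz : z ∈ Submodule.span ℝ (C : Set H)) (v : H) :
    ⟪z, (Submodule.span ℝ (C : Set H)).starProjection v⟫ = ⟪z, v⟫ := by
  rw [← Submodule.inner_starProjection_left_eq_right, Submodule.starProjection_eq_self_iff.mpr hz]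

theorem starProjection_span_mem_innerDual {v : H} (hv : v ∈ innerDual (C : Set H)) :
    (Submodule.span ℝ (C : Set H)).starProjection v ∈ innerDual (C : Set H) :=
  mem_innerDual.mpr fun z hz => by
    rw [inner_starProjection_span (Submodule.subset_span hz)]
    exact hv hz

theorem unitNormals_nonempty (hC : ∃ u ∈ innerDual (C : Set H), ∃ z ∈ C, 0 < ⟪z, u⟫) :
    (unitNormals C).Nonempty := by
  obtain ⟨u, hu, z, hz, hzu⟩ := hC
  have hzw : ⟪z, (Submodule.span ℝ (C : Set H)).starProjection u⟫ = ⟪z, u⟫ :=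
    inner_starProjection_span (Submodule.subset_span hz) u
  refine ⟨_, inv_norm_smul_mem_unitNormals (Submodule.starProjection_apply_mem _ u)
    (starProjection_span_mem_innerDual hu) ?_⟩
  intro hw
  rw [hw, inner_zero_right] at hzw
  linarith

theorem mem_of_forall_unitNormals_inner_nonneg {y : H} (hy : y ∈ Submodule.span ℝ (C : Set H))
    (hnonneg : ∀ u ∈ unitNormals C, 0 ≤ ⟪y, u⟫) : y ∈ C := by
  rw [← SetLike.mem_coe, ← innerDual_innerDual C]
  refine mem_innerDual.mpr fun v hv => ?_
  rw [real_inner_comm, ← inner_starProjection_span hy]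
  set w := (Submodule.span ℝ (C : Set H)).starProjection v
  rcases eq_or_ne w 0 with hw | hw
  · simp [hw]
  have := hnonneg _ (inv_norm_smul_mem_unitNormals (Submodule.starProjection_apply_mem _ v)
    (starProjection_span_mem_innerDual hv) hw)
  rw [real_inner_smul_right] at this
  exact nonneg_of_mul_nonneg_right this (by positivity)

theorem exists_sub_smul_mem_inner_eq_zero {b x : H} (hbC : b ∈ C)
    (hC : ∃ u ∈ innerDual (C : Set H), ∃ z ∈ C, 0 < ⟪z, u⟫)
    (hb : ∀ u ∈ innerDual (C : Set H), (∃ z ∈ C, 0 < ⟪z, u⟫) → 0 < ⟪b, u⟫) (hx : x ∈ C) :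
    ∃ t : ℝ, 0 ≤ t ∧ x - t • b ∈ C ∧
      ∃ u ∈ innerDual (C : Set H), (∃ z ∈ C, 0 < ⟪z, u⟫) ∧ ⟪x - t • b, u⟫ = 0 := by
  have hbpos : ∀ u ∈ unitNormals C, 0 < ⟪b, u⟫ := fun u hu =>
    hb u hu.1.2 (exists_inner_pos_of_mem_unitNormals hu)
  obtain ⟨u₀, hu₀, hmin⟩ := isCompact_unitNormals.exists_isMinOn (unitNormals_nonempty hC)
    (f := fun u => ⟪x, u⟫ / ⟪b, u⟫)
    (ContinuousOn.div (by fun_prop) (by fun_prop) fun u hu => (hbpos u hu).ne')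
  set t := ⟪x, u₀⟫ / ⟪b, u₀⟫
  have hinner : ∀ u, ⟪x - t • b, u⟫ = ⟪x, u⟫ - t * ⟪b, u⟫ := fun u => by
    rw [inner_sub_left, real_inner_smul_left]
  have hspan : x - t • b ∈ Submodule.span ℝ (C : Set H) :=
    sub_mem (Submodule.subset_span hx) (Submodule.smul_mem _ t (Submodule.subset_span hbC))
  refine ⟨t, div_nonneg (hu₀.1.2 hx) (hbpos u₀ hu₀).le,
    mem_of_forall_unitNormals_inner_nonneg hspan fun u hu => ?_,
    u₀, hu₀.1.2, exists_inner_pos_of_mem_unitNormals hu₀, ?_⟩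
  · rw [hinner, sub_nonneg, ← le_div_iff₀ (hbpos u hu)]
    exact hmin hu
  · rw [hinner, div_mul_cancel₀ _ (hbpos u₀ hu₀).ne', sub_self]

theorem exists_innerDual_inner_pos (hsal : ∀ x, x ∈ C → -x ∈ C → x = 0) (hne : ∃ x ∈ C, x ≠ 0) :
    ∃ u ∈ innerDual (C : Set H), ∃ z ∈ C, 0 < ⟪z, u⟫ := by
  obtain ⟨x, hx, hx0⟩ := hne
  obtain ⟨u, hu, hxu⟩ := C.hyperplane_separation' (x₀ := -x) fun h => hx0 (hsal x hx h)
  exact ⟨u, mem_innerDual.mpr hu, x, hx, by rw [inner_neg_left] at hxu; linarith⟩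

end ProperCone

theorem star_subdivision_support_general
    {V : Type*} [AddCommGroup V] [Module ℝ V] [FiniteDimensional ℝ V]
    (s : Finset V) (σ : Set V)
    (hσ : σ = {x | ∃ c : V → ℝ, (∀ v, 0 ≤ c v) ∧ x = ∑ v ∈ s, c v • v})
    (hpointed : ∀ x, x ∈ σ → -x ∈ σ → x = 0)
    (hnontriv : ∃ x ∈ σ, x ≠ 0)
    (b : V) (hb : b ∈ σ)
    (hbrel : ∀ φ : V →ₗ[ℝ] ℝ, (∀ z ∈ σ, 0 ≤ φ z) → (∃ z ∈ σ, 0 < φ z) → 0 < φ b)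
    (bd : Set V)
    (hbd : bd = {x ∈ σ | ∃ φ : V →ₗ[ℝ] ℝ,
      (∀ z ∈ σ, 0 ≤ φ z) ∧ (∃ z ∈ σ, 0 < φ z) ∧ φ x = 0})
    (Δ : Set (Set V))
    (hΔcover : ⋃₀ Δ = bd) :
    (∀ τ ∈ Δ, {x | ∃ t : ℝ, 0 ≤ t ∧ ∃ y ∈ τ, x = t • b + y} ⊆ σ) ∧
    ((⋃₀ Δ) ∪ (⋃ τ ∈ Δ, {x | ∃ t : ℝ, 0 ≤ t ∧ ∃ y ∈ τ, x = t • b + y}) = σ) := by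
  let e : V ≃ₗ[ℝ] EuclideanSpace ℝ (Fin (Module.finrank ℝ V)) :=
    (Module.finBasis ℝ V).equivFun.trans (WithLp.linearEquiv 2 ℝ _).symm
  let _ : NormedAddCommGroup V := NormedAddCommGroup.induced V _ e e.injective
  let _ : InnerProductSpace ℝ V := InnerProductSpace.induced e
  have hhull : (PointedCone.hull ℝ (s : Set V) : Set V) = σ :=
    (PointedCone.coe_hull_finset s).trans hσ.symm
  obtain ⟨C, rfl⟩ : ∃ C : ProperCone ℝ V, (C : Set V) = σ :=
    ⟨⟨_, PointedCone.isClosed_hull_finset s (by rwa [← hhull] at hpointed)⟩, hhull⟩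
  subst hbd
  have hbdC : ⋃₀ Δ ⊆ C := hΔcover ▸ fun x hx => hx.1
  have hstar : ∀ τ ∈ Δ, {x | ∃ t : ℝ, 0 ≤ t ∧ ∃ y ∈ τ, x = t • b + y} ⊆ C := by
    rintro τ hτ _ ⟨t, ht, y, hy, rfl⟩
    exact add_mem (C.smul_mem hb ht) (hbdC ⟨τ, hτ, hy⟩)
  refine ⟨hstar, (union_subset hbdC (iUnion₂_subset hstar)).antisymm fun x hx => ?_⟩
  obtain ⟨t, ht, hy, u, hu, hpos, hzero⟩ := ProperCone.exists_sub_smul_mem_inner_eq_zero hb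
    (ProperCone.exists_innerDual_inner_pos hpointed hnontriv)
    (fun u hu hpos => hbrel ((innerₗ V).flip u) hu hpos) hx
  obtain ⟨τ, hτ, hyτ⟩ : x - t • b ∈ ⋃₀ Δ :=
    hΔcover ▸ ⟨hy, (innerₗ V).flip u, hu, hpos, hzero⟩
  exact Or.inr (mem_iUnion₂.mpr ⟨τ, hτ, t, ht, _, hyτ, by abel⟩)

/-- Star (coning) subdivision.  Let `σ ≠ {0}` be a pointed rational
polyhedral cone, `b ≠ 0` a point of its relative interior (e.g. the barycenter), and
`ρ = ℝ≥0 · b`.  Let `Δ∂` be a fan subdividing the boundary `∂σ` (the union of proper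
faces of `σ`).  Then the cones `Conv(ρ, τ) = ρ + τ` for `τ ∈ Δ∂`, together with the
cones of `Δ∂`, are contained in `σ` and their union is all of `σ`: the resulting fan is
a subdivision of `σ`. -/
theorem star_subdivision_support
    {V : Type*} [AddCommGroup V] [Module ℝ V] [FiniteDimensional ℝ V]
    (s : Finset V) (σ : Set V)
    (hσ : σ = {x | ∃ c : V → ℝ, (∀ v, 0 ≤ c v) ∧ x = ∑ v ∈ s, c v • v})
    (hpointed : ∀ x, x ∈ σ → -x ∈ σ → x = 0)
    (hnontriv : ∃ x ∈ σ, x ≠ 0)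
    (b : V) (hb : b ∈ σ) (hbne : b ≠ 0)
    (hbrel : ∀ φ : V →ₗ[ℝ] ℝ, (∀ z ∈ σ, 0 ≤ φ z) → (∃ z ∈ σ, 0 < φ z) → 0 < φ b)
    (bd : Set V)
    (hbd : bd = {x ∈ σ | ∃ φ : V →ₗ[ℝ] ℝ,
      (∀ z ∈ σ, 0 ≤ φ z) ∧ (∃ z ∈ σ, 0 < φ z) ∧ φ x = 0})
    (Δ : Set (Set V))
    (hΔsub : ∀ τ ∈ Δ, τ ⊆ bd)
    (hΔcover : ⋃₀ Δ = bd) :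
    (∀ τ ∈ Δ, {x | ∃ t : ℝ, 0 ≤ t ∧ ∃ y ∈ τ, x = t • b + y} ⊆ σ) ∧
    ((⋃₀ Δ) ∪ (⋃ τ ∈ Δ, {x | ∃ t : ℝ, 0 ≤ t ∧ ∃ y ∈ τ, x = t • b + y}) = σ) :=
  star_subdivision_support_general s σ hσ hpointed hnontriv b hb hbrel bd hbd Δ hΔcover
end

section
/- Let $M$ be a lattice acting on a set of rational polyhedral cones as follows. Suppose $\Delta$ is a stacky fan (in the sense below) for the data $(\sigma, M, Q, N')$, and define a category $\Sigma$ whose objects are equivalence classes $[\tau]$ of cones of $\Delta$ under the relation $\tau \sim T_m\tau$ ($m\in M$), and whose morphisms $[\tau_1]\to[\tau_2]$ are given by a face inclusion $T_m\tau_1 \subseteq \tau_2$ for some $m \in M$ (two such data giving the same morphism). Then between any two objects of $\Sigma$ there is at most one morphism. Concretely: if $T_{m_1}\tau_1 \subseteq \tau_2$ and $T_{m_2}\tau_1 \subseteq \tau_2$ are both face inclusions, then $T_{m_1}\tau_1 = T_{m_2}\tau_1$ as subsets, using that $\tau_2 \cap T_{m_1-m_2}\tau_2$ is pointwise fixed by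 $T_{m_1-m_2}$. -/
/-- Rigidity of face inclusions in a stacky fan.  Let the lattice `M` act
on an ambient set `V` by translations `T : M → V → V` (an additive action), and let `Δ`
be a collection of cones (subsets of `V`) which is stable under the action and such that
for every `τ ∈ Δ` and `m ∈ M` the intersection `τ ∩ T_m τ` is pointwise fixed by `T_m`.
If `T_{m₁} τ₁ ⊆ τ₂` and `T_{m₂} τ₁ ⊆ τ₂` (for `τ₁, τ₂ ∈ Δ`), then
`T_{m₁} τ₁ = T_{m₂} τ₁`; hence between any two objects of the associated category `Σ`
there is at most one morphism. -/
theorem stacky_fan_morphism_unique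
    {M V : Type*} [AddCommGroup M]
    (T : M → V → V)
    (hT0 : ∀ x : V, T 0 x = x)
    (hTadd : ∀ (m m' : M) (x : V), T (m + m') x = T m (T m' x))
    (Δ : Set (Set V))
    (hstable : ∀ τ ∈ Δ, ∀ m : M, T m '' τ ∈ Δ)
    (hfix : ∀ τ ∈ Δ, ∀ m : M, ∀ x ∈ τ ∩ (T m '' τ), T m x = x)
    (τ1 τ2 : Set V) (hτ1 : τ1 ∈ Δ) (hτ2 : τ2 ∈ Δ)
    (m1 m2 : M)
    (h1 : T m1 '' τ1 ⊆ τ2) (h2 : T m2 '' τ1 ⊆ τ2) :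
    T m1 '' τ1 = T m2 '' τ1 := by
  have key : ∀ x ∈ τ1, T m1 x = T m2 x := by
    intro x hx
    have hy2 : T m1 x ∈ τ2 := h1 ⟨x, hx, rfl⟩
    have hz2 : T m2 x ∈ τ2 := h2 ⟨x, hx, rfl⟩
    have heq : T (m1 - m2) (T m2 x) = T m1 x := by
      rw [← hTadd]; congr 1; abel
    have hmem : T m1 x ∈ τ2 ∩ (T (m1 - m2) '' τ2) :=
      ⟨hy2, ⟨T m2 x, hz2, heq⟩⟩
    have hfixed := hfix τ2 hτ2 (m1 - m2) _ hmem
    have : T (m2 - m1) (T m1 x) = T m2 x := by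
      rw [← hTadd]; congr 1; abel
    calc T m1 x = T (m2 - m1) (T (m1 - m2) (T m1 x)) := by
          rw [← hTadd, ← hTadd]
          have : m2 - m1 + (m1 - m2) = 0 := by abel
          rw [this, zero_add]
      _ = T (m2 - m1) (T m1 x) := by rw [hfixed]
      _ = T m2 x := this
  ext y
  constructor
  · rintro ⟨x, hx, rfl⟩; exact ⟨x, hx, (key x hx).symm⟩
  · rintro ⟨x, hx, rfl⟩; exact ⟨x, hx, key x hx⟩
end

section
/- Let $\tau$ be a rational polyhedral cone with lattice $N_\tau$, and let $\Delta$ be a finite set of rational polyhedral cones $\tau' \subseteq \tau$, each equipped with a sublattice $N_{\tau'} \subseteq N_\tau \cap \mathrm{Span}(\tau')$ of finite index, such that: every face of a member of $\Delta$ is in $\Delta$, any two members intersect in a common face, and for face inclusions $\tau_1 \subseteq \tau_2$ in $\Delta$ one has $N_{\tau_2} \cap \mathrm{Span}(\tau_1) = N_{\tau_1}$. Suppose moreover there exists a subdivision $\Sigma \to \tau$ (a fan with support $\tau$ and lattices induced from $N_\tau$) such that every cone of $\Sigma$ maps into some $(\tau', N_{\tau'}) \in \Delta$ respecting lattices. Then: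 (a) for every $\tau' \in \Delta$ one has $N_{\tau'} = N_\tau \cap \mathrm{Span}(\tau')$, and (b) every point $x \in \tau$ lies in some member of $\Delta$; i.e., $\Delta$ is itself a subdivision of $\tau$. -/
/-- A rational polyhedral cone with respect to the lattice `L`: the set of nonnegative
real combinations of finitely many elements of `L`. -/
def RatCone {V : Type*} [AddCommGroup V] [Module ℝ V]
    (L : AddSubgroup V) (c : Set V) : Prop :=
  ∃ s : Finset V, (↑s : Set V) ⊆ (L : Set V) ∧
    c = {x | ∃ w : V → ℝ, (∀ v, 0 ≤ w v) ∧ x = ∑ v ∈ s, w v • v}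

/-- `F` is a face of the cone `c`: the zero locus on `c` of a linear functional which is
nonnegative on `c`. -/
def IsFace {V : Type*} [AddCommGroup V] [Module ℝ V] (F c : Set V) : Prop :=
  ∃ φ : V →ₗ[ℝ] ℝ, (∀ x ∈ c, 0 ≤ φ x) ∧ F = {x | x ∈ c ∧ φ x = 0}

set_option maxHeartbeats 1000000 in
/-- Let `τ` be a rational polyhedral cone with lattice `L`, and `Δ` a
finite set of rational polyhedral cones `c i ⊆ τ` each equipped with a finite-index
sublattice `Lc i ⊆ L ∩ Span(c i)`, closed under faces, intersecting pairwise in common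
faces, with compatible lattices on face inclusions.  If there exists a subdivision of
`τ` (a finite family `d j` of rational cones covering `τ`, with the lattices induced
from `L`) such that every `d j` maps into some `(c i, Lc i)` respecting lattices, then
(a) `Lc i = L ∩ Span(c i)` for every `i`, and (b) the cones of `Δ` cover `τ`, i.e. `Δ`
is itself an honest subdivision of `τ`. -/
theorem stacky_fan_factoring_subdivision_is_subdivision
    {V : Type*} [AddCommGroup V] [Module ℝ V] [FiniteDimensional ℝ V]
    (L : AddSubgroup V) (τ : Set V) (hτ : RatCone L τ)
    {ι κ : Type*} [Finite ι] [Finite κ]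
    (c : ι → Set V) (Lc : ι → AddSubgroup V)
    (hc : ∀ i, RatCone L (c i)) (hsub : ∀ i, c i ⊆ τ)
    (hLc₁ : ∀ i, (Lc i : Set V) ⊆ (L : Set V) ∩ (Submodule.span ℝ (c i) : Set V))
    (hLc₂ : ∀ i, ∀ x ∈ L, x ∈ Submodule.span ℝ (c i) →
      ∃ k : ℕ, 0 < k ∧ (k : ℤ) • x ∈ Lc i)
    (hfaces : ∀ i, ∀ F : Set V, IsFace F (c i) → ∃ i', c i' = F)
    (hmeet : ∀ i i', IsFace (c i ∩ c i') (c i) ∧ IsFace (c i ∩ c i') (c i'))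
    (hlatface : ∀ i i', IsFace (c i) (c i') →
      (Lc i' : Set V) ∩ (Submodule.span ℝ (c i) : Set V) = (Lc i : Set V))
    (d : κ → Set V) (hd : ∀ j, RatCone L (d j))
    (hsupport : (⋃ j, d j) = τ)
    (hfactor : ∀ j, ∃ i, d j ⊆ c i ∧
      (L : Set V) ∩ (Submodule.span ℝ (d j) : Set V) ⊆ (Lc i : Set V)) :
    (∀ i, (Lc i : Set V) = (L : Set V) ∩ (Submodule.span ℝ (c i) : Set V)) ∧
    (∀ x ∈ τ, ∃ i, x ∈ c i) := by
  classical
  constructor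
  · intro i
    refine Set.Subset.antisymm (hLc₁ i) ?_
    rintro x ⟨hxL, hxW⟩
    obtain ⟨s, hsL, hs⟩ := hc i
    -- generators belong to the cone
    have hgen : (↑s : Set V) ⊆ c i := by
      intro v hv
      rw [hs]
      refine ⟨fun u => if u = v then 1 else 0, fun u => by by_cases h : u = v <;> simp [h], ?_⟩
      symm
      simp only [ite_smul, one_smul, zero_smul]
      rw [Finset.sum_ite_eq' s v (fun u => u), if_pos (Finset.mem_coe.1 hv)]
    have hciW : c i ⊆ (Submodule.span ℝ (↑s : Set V) : Set V) := by
      intro y hy; rw [hs] at hy; obtain ⟨w, _, rfl⟩ := hy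
      exact Submodule.sum_mem _ fun v hv =>
        Submodule.smul_mem _ _ (Submodule.subset_span hv)
    have hW : Submodule.span ℝ (c i) = Submodule.span ℝ (↑s : Set V) :=
      le_antisymm (Submodule.span_le.2 hciW)
        (Submodule.span_le.2 (hgen.trans Submodule.subset_span))
    set W := Submodule.span ℝ (c i) with hWdef
    set S : κ → Submodule ℝ V := fun j => Submodule.span ℝ (c i ∩ d j) with hSdef
    have hSW : ∀ j, S j ≤ W := fun j => Submodule.span_mono Set.inter_subset_left
    -- choose separating functionals
    have key : ∀ j, ∃ φ : V →ₗ[ℝ] ℝ,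
        S j < W → (∀ y ∈ S j, φ y = 0) ∧ ∃ v ∈ s, φ v ≠ 0 := by
      intro j
      by_cases h : S j < W
      · obtain ⟨y, hyW, hyS⟩ := SetLike.exists_of_lt h
        obtain ⟨f, hf0, hfmap⟩ := (S j).exists_dual_map_eq_bot_of_notMem hyS inferInstance
        refine ⟨f, fun _ => ⟨?_, ?_⟩⟩
        · intro z hz
          have : f z ∈ Submodule.map f (S j) := Submodule.mem_map_of_mem hz
          rw [hfmap] at this
          simpa using this
        · by_contra hcon
          push_neg at hcon
          have : W ≤ LinearMap.ker f := by
            rw [hW]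
            exact Submodule.span_le.2 fun v hv => by
              simpa [LinearMap.mem_ker] using hcon v hv
          exact hf0 (this hyW)
      · exact ⟨0, fun h' => absurd h' h⟩
    choose φ hφ using key
    -- enumerate the generators
    let e : {v // v ∈ s} ≃ Fin s.card := s.equivFin
    -- polynomials
    let P : κ → Polynomial ℝ := fun j =>
      ∑ v ∈ s.attach, Polynomial.C (φ j v) * Polynomial.X ^ (e v : ℕ)
    have hPne : ∀ j, S j < W → P j ≠ 0 := by
      intro j hj hP0
      obtain ⟨hker, v0, hv0, hv0ne⟩ := hφ j hj
      have hco : (P j).coeff (e ⟨v0, hv0⟩ : ℕ) = φ j v0 := by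
        show (∑ v ∈ s.attach, Polynomial.C (φ j v) * Polynomial.X ^ (e v : ℕ)).coeff _ = _
        rw [Polynomial.finset_sum_coeff]
        rw [Finset.sum_eq_single (⟨v0, hv0⟩ : {v // v ∈ s})]
        · simp [Polynomial.coeff_C_mul, Polynomial.coeff_X_pow]
        · intro b _ hb
          have : (e b : ℕ) ≠ (e ⟨v0, hv0⟩ : ℕ) := by
            simpa [Fin.val_eq_val, e.apply_eq_iff_eq] using hb
          simp [Polynomial.coeff_C_mul, Polynomial.coeff_X_pow, Ne.symm this]
        · intro h; exact absurd (Finset.mem_attach _ _) h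
      rw [hP0] at hco
      simp at hco
      exact hv0ne hco.symm
    -- bad set of parameters
    have hBfin : (⋃ j ∈ {j : κ | S j < W}, {t : ℝ | (P j).IsRoot t}).Finite := by
      refine Set.Finite.biUnion (Set.toFinite _) ?_
      intro j hj
      exact Polynomial.finite_setOf_isRoot (hPne j hj)
    obtain ⟨t, ht⟩ := ((Set.Ioi_infinite (0:ℝ)).diff hBfin).nonempty
    obtain ⟨ht0, htB⟩ := ht
    rw [Set.mem_Ioi] at ht0
    -- the generic point
    set p : V := ∑ v ∈ s.attach, t ^ (e v : ℕ) • (v : V) with hpdef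
    have hpci : p ∈ c i := by
      rw [hs]
      refine ⟨fun u => if h : u ∈ s then t ^ (e ⟨u, h⟩ : ℕ) else 0, ?_, ?_⟩
      · intro u
        by_cases h : u ∈ s <;> simp [h] <;> positivity
      · rw [hpdef, ← Finset.sum_attach s
          (fun u => (if h : u ∈ s then t ^ (e ⟨u, h⟩ : ℕ) else 0) • u)]
        exact Finset.sum_congr rfl fun v _ => by simp
    have hφp : ∀ j, φ j p = (P j).eval t := by
      intro j
      rw [hpdef]
      simp only [map_sum, map_smul, smul_eq_mul, P, Polynomial.eval_finset_sum,
        Polynomial.eval_mul, Polynomial.eval_C, Polynomial.eval_pow, Polynomial.eval_X]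
      exact Finset.sum_congr rfl fun v _ => mul_comm _ _
    -- p lies in some d j₀
    have hpτ : p ∈ ⋃ j, d j := by rw [hsupport]; exact hsub i hpci
    obtain ⟨j0, hpd⟩ := Set.mem_iUnion.1 hpτ
    have hpS : p ∈ S j0 := Submodule.subset_span ⟨hpci, hpd⟩
    have hSeq : S j0 = W := by
      rcases lt_or_eq_of_le (hSW j0) with hlt | heq
      · exfalso
        obtain ⟨hker, -⟩ := hφ j0 hlt
        have h1 : φ j0 p = 0 := hker p hpS
        have h2 : (P j0).eval t ≠ 0 := by
          intro hroot
          exact htB (Set.mem_biUnion hlt hroot)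
        rw [hφp j0] at h1
        exact h2 h1
      · exact heq
    obtain ⟨i', hdc, hdL⟩ := hfactor j0
    -- c i is contained in c i'
    obtain ⟨ψ, hψpos, hψeq⟩ := (hmeet i i').1
    have hker2 : W ≤ LinearMap.ker ψ := by
      rw [← hSeq]
      refine Submodule.span_le.2 ?_
      rintro y ⟨hy1, hy2⟩
      have : y ∈ c i ∩ c i' := ⟨hy1, hdc hy2⟩
      rw [hψeq] at this
      simpa [LinearMap.mem_ker] using this.2
    have hsubci : c i ⊆ c i' := by
      intro y hy
      have : y ∈ c i ∩ c i' := by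
        rw [hψeq]
        exact ⟨hy, by simpa [LinearMap.mem_ker] using hker2 (Submodule.subset_span hy)⟩
      exact this.2
    have hface : IsFace (c i) (c i') := by
      have h2 := (hmeet i i').2
      rwa [Set.inter_eq_left.mpr hsubci] at h2
    have hlat := hlatface i i' hface
    have hxS : x ∈ Submodule.span ℝ (d j0) := by
      have h1 : x ∈ S j0 := by rw [hSeq]; exact hxW
      exact Submodule.span_mono Set.inter_subset_right h1
    have hxLc' : x ∈ (Lc i' : Set V) := hdL ⟨hxL, hxS⟩
    rw [← hlat]
    exact ⟨hxLc', hxW⟩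
  · intro x hx
    rw [← hsupport] at hx
    obtain ⟨j, hj⟩ := Set.mem_iUnion.1 hx
    obtain ⟨i, hi, -⟩ := hfactor j
    exact ⟨i, hi hj⟩
end

section
/- Let $N$ be a lattice and $\sigma \subseteq N_{\mathbb{R}}$ a rational polyhedral cone, and let $\Delta$ be a stacky fan in $\sigma$: a finite set of rational polyhedral cones $\tau \subseteq \sigma$ with finite-index sublattices $N_\tau \subseteq N \cap \mathrm{Span}(\tau)$, closed under faces, pairwise intersecting in common faces, with compatible lattices on faces. Let $S = \bigcup_{\tau\in\Delta}\tau\cap N_\tau$, and for a finite-index sublattice $N'\subseteq N$ let $\sigma_0$ be a full-dimensional rational polyhedral cone with $\sigma_0 \cap N' = \sigma_0 \cap S$. Then every full-dimensional cone $\tau' \in \Delta$ whose intersection with $\sigma_0$ is full-dimensional satisfies $N_{\tau'} = N'$. -/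
private lemma ratCone_props {V : Type*} [AddCommGroup V] [Module ℝ V]
    (L : AddSubgroup V) (c : Set V) (h : RatCone L c) :
    (0:V) ∈ c ∧ (∀ x ∈ c, ∀ y ∈ c, x + y ∈ c) ∧
    (∀ x ∈ c, ∀ r : ℝ, 0 ≤ r → r • x ∈ c) ∧
    c ⊆ (Submodule.span ℝ (L : Set V) : Set V) := by
  obtain ⟨s, hsL, rfl⟩ := h
  refine ⟨⟨fun _ => 0, fun v => le_refl 0, by simp⟩, ?_, ?_, ?_⟩
  · rintro x ⟨w, hw, rfl⟩ y ⟨w', hw', rfl⟩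
    exact ⟨w + w', fun v => add_nonneg (hw v) (hw' v), by
      simp [add_smul, Finset.sum_add_distrib]⟩
  · rintro x ⟨w, hw, rfl⟩ r hr
    exact ⟨fun v => r * w v, fun v => mul_nonneg hr (hw v), by
      simp [Finset.smul_sum, mul_smul]⟩
  · rintro x ⟨w, hw, rfl⟩
    exact Submodule.sum_mem _ fun v hv =>
      Submodule.smul_mem _ _ (Submodule.subset_span (hsL hv))

private lemma sum_mem_cone {V : Type*} [AddCommGroup V] [Module ℝ V] {K : Set V}
    (h0 : (0:V) ∈ K)
    (hadd : ∀ x ∈ K, ∀ y ∈ K, x + y ∈ K)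
    (hsmul : ∀ x ∈ K, ∀ r : ℝ, 0 ≤ r → r • x ∈ K)
    {κ : Type*} (t : Finset κ) (g : κ → V) (w : κ → ℝ)
    (hg : ∀ j ∈ t, g j ∈ K) (hw : ∀ j ∈ t, 0 ≤ w j) :
    ∑ j ∈ t, w j • g j ∈ K := by
  induction t using Finset.cons_induction with
  | empty => simpa using h0
  | cons a t ha ih =>
    rw [Finset.sum_cons]
    exact hadd _ (hsmul _ (hg a (Finset.mem_cons_self a t)) _
        (hw a (Finset.mem_cons_self a t))) _
      (ih (fun j hj => hg j (Finset.mem_cons_of_mem hj))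
        (fun j hj => hw j (Finset.mem_cons_of_mem hj)))

/-- From minimal fans to sublattice colorings.  Let `Δ` be a stacky fan
(finite set of rational cones `c i` with finite-index sublattices `Lc i`, closed under
faces, pairwise common-face intersections, compatible lattices on faces) in the lattice
`L`, with lattice-point set `S = ⋃ᵢ (c i ∩ Lc i)`.  Let `N' ⊆ L` be a finite-index
sublattice and `σ₀` a full-dimensional rational polyhedral cone with
`σ₀ ∩ N' = σ₀ ∩ S`.  Then every full-dimensional cone `c i` of `Δ` whose intersection
with `σ₀` is full-dimensional satisfies `Lc i = N'`. -/
theorem coloring_cone_lattice_eq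
    {V : Type*} [AddCommGroup V] [Module ℝ V] [FiniteDimensional ℝ V]
    (L : AddSubgroup V)
    {ι : Type*} [Finite ι]
    (c : ι → Set V) (Lc : ι → AddSubgroup V)
    (hc : ∀ i, RatCone L (c i))
    (hLc₁ : ∀ i, (Lc i : Set V) ⊆ (L : Set V) ∩ (Submodule.span ℝ (c i) : Set V))
    (hLc₂ : ∀ i, ∀ x ∈ L, x ∈ Submodule.span ℝ (c i) →
      ∃ k : ℕ, 0 < k ∧ (k : ℤ) • x ∈ Lc i)
    (hfaces : ∀ i, ∀ F : Set V, IsFace F (c i) → ∃ i', c i' = F)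
    (hmeet : ∀ i i', IsFace (c i ∩ c i') (c i) ∧ IsFace (c i ∩ c i') (c i'))
    (hlatface : ∀ i i', IsFace (c i) (c i') →
      (Lc i' : Set V) ∩ (Submodule.span ℝ (c i) : Set V) = (Lc i : Set V))
    (S : Set V) (hSdef : S = ⋃ i, c i ∩ (Lc i : Set V))
    (N' : AddSubgroup V) (hN'le : N' ≤ L)
    (hN'fin : ∀ x ∈ L, ∃ k : ℕ, 0 < k ∧ (k : ℤ) • x ∈ N')
    (σ0 : Set V) (hσ0 : RatCone L σ0)
    (hσ0full : Submodule.span ℝ σ0 = ⊤)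
    (hmatch : σ0 ∩ (N' : Set V) = σ0 ∩ S) :
    ∀ i, Submodule.span ℝ (c i) = ⊤ → Submodule.span ℝ (σ0 ∩ c i) = ⊤ →
      Lc i = N' := by
  intro i hfull hKfull
  obtain ⟨h00, hadd0, hsmul0, hsub0⟩ := ratCone_props L σ0 hσ0
  obtain ⟨h0i, haddi, hsmuli, hsubi⟩ := ratCone_props L (c i) (hc i)
  set K : Set V := σ0 ∩ c i with hKdef
  have h0K : (0:V) ∈ K := ⟨h00, h0i⟩
  have haddK : ∀ x ∈ K, ∀ y ∈ K, x + y ∈ K := fun x hx y hy =>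
    ⟨hadd0 _ hx.1 _ hy.1, haddi _ hx.2 _ hy.2⟩
  have hsmulK : ∀ x ∈ K, ∀ r : ℝ, 0 ≤ r → r • x ∈ K := fun x hx r hr =>
    ⟨hsmul0 _ hx.1 _ hr, hsmuli _ hx.2 _ hr⟩
  -- L spans V
  have hLspan : Submodule.span ℝ (L : Set V) = ⊤ :=
    top_unique (hσ0full ▸ Submodule.span_le.mpr hsub0)
  -- basis inside K
  obtain ⟨b, hbK, hbspan, hbli⟩ := exists_linearIndependent ℝ K
  have hbtop : Submodule.span ℝ b = ⊤ := by rw [hbspan, hKfull]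
  let B : Module.Basis b ℝ V := Module.Basis.mk hbli (by rw [Subtype.range_coe, hbtop])
  haveI : Fintype b := FiniteDimensional.fintypeBasisIndex B
  have hBmem : ∀ j : b, B j ∈ K := fun j => hbK (by simpa [B, Module.Basis.mk_apply] using j.2)
  have hmemK : ∀ x : V, (∀ j, 0 ≤ B.repr x j) → x ∈ K := by
    intro x hx
    have hxr := B.sum_repr x
    rw [← hxr]
    exact sum_mem_cone h0K haddK hsmulK _ _ _ (fun j _ => hBmem j) (fun j _ => hx j)
  -- basis inside L
  obtain ⟨u, huL, huspan, huli⟩ := exists_linearIndependent ℝ (L : Set V)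
  have hutop : Submodule.span ℝ u = ⊤ := by rw [huspan, hLspan]
  let U : Module.Basis u ℝ V := Module.Basis.mk huli (by rw [Subtype.range_coe, hutop])
  haveI : Fintype u := FiniteDimensional.fintypeBasisIndex U
  have hUmem : ∀ k : u, (U k : V) ∈ L := fun k => huL (by simpa [U, Module.Basis.mk_apply] using k.2)
  -- the lattice point with positive coordinates
  set C : ℝ := ∑ j : b, ∑ k : u, |B.repr (U k) j| with hC
  set T : ℝ := C + 1 with hT
  set y : V := ∑ j : b, T • B j with hy
  set z : V := ∑ k : u, ⌊U.repr y k⌋ • (U k : V) with hz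
  have hzL : z ∈ L := AddSubgroup.sum_mem _ fun k _ => AddSubgroup.zsmul_mem _ (hUmem k) _
  have hCnn : 0 ≤ C := Finset.sum_nonneg fun j _ =>
    Finset.sum_nonneg fun k _ => abs_nonneg _
  have hrepry : ∀ j : b, B.repr y j = T := by
    intro j
    simp [y, Finsupp.single_apply, Finset.sum_ite_eq]
  have hzpos : ∀ j : b, 0 < B.repr z j := by
    intro j
    have hyz : B.repr y j - B.repr z j
        = ∑ k : u, (U.repr y k - (⌊U.repr y k⌋ : ℝ)) * B.repr (U k) j := by
      have hyrepr : y = ∑ k : u, U.repr y k • (U k : V) := (U.sum_repr y).symm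
      calc B.repr y j - B.repr z j
          = B.repr (y - z) j := by rw [map_sub]; rfl
        _ = ∑ k : u, (U.repr y k - (⌊U.repr y k⌋ : ℝ)) * B.repr (U k) j := by
            conv_lhs => rw [hyrepr]
            rw [hz]
            rw [← Finset.sum_sub_distrib]
            rw [map_sum, Finsupp.coe_finset_sum, Finset.sum_apply]
            refine Finset.sum_congr rfl fun k _ => ?_
            rw [show (⌊U.repr y k⌋ : ℤ) • (U k : V) = ((⌊U.repr y k⌋ : ℝ)) • (U k : V)
              from (Int.cast_smul_eq_zsmul ℝ _ _).symm]
            rw [← sub_smul, map_smul, Finsupp.smul_apply, smul_eq_mul, sub_mul]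
    have hbound : B.repr y j - B.repr z j ≤ C := by
      rw [hyz]
      calc ∑ k : u, (U.repr y k - (⌊U.repr y k⌋ : ℝ)) * B.repr (U k) j
          ≤ ∑ k : u, |B.repr (U k) j| := by
            refine Finset.sum_le_sum fun k _ => ?_
            have h1 : 0 ≤ U.repr y k - (⌊U.repr y k⌋ : ℝ) := by
              linarith [Int.floor_le (U.repr y k)]
            have h2 : U.repr y k - (⌊U.repr y k⌋ : ℝ) ≤ 1 := by
              linarith [Int.lt_floor_add_one (U.repr y k)]
            calc (U.repr y k - (⌊U.repr y k⌋ : ℝ)) * B.repr (U k) j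
                ≤ |(U.repr y k - (⌊U.repr y k⌋ : ℝ)) * B.repr (U k) j| := le_abs_self _
              _ = (U.repr y k - (⌊U.repr y k⌋ : ℝ)) * |B.repr (U k) j| := by
                  rw [abs_mul, abs_of_nonneg h1]
              _ ≤ 1 * |B.repr (U k) j| := by
                  exact mul_le_mul_of_nonneg_right h2 (abs_nonneg _)
              _ = |B.repr (U k) j| := one_mul _
        _ ≤ C := Finset.single_le_sum
            (f := fun j : b => ∑ k : u, |B.repr (U k) j|)
            (fun j' _ => Finset.sum_nonneg fun k _ => abs_nonneg _) (Finset.mem_univ j)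
    have := hrepry j
    linarith
  -- scale z into Lc i ∩ N'
  obtain ⟨k₁, hk₁, hk₁mem⟩ := hLc₂ i z hzL (by rw [hfull]; trivial)
  obtain ⟨k₂, hk₂, hk₂mem⟩ := hN'fin ((k₁:ℤ) • z) (AddSubgroup.zsmul_mem _ hzL _)
  set q : V := (k₂:ℤ) • ((k₁:ℤ) • z) with hq
  have hqLc : q ∈ Lc i := AddSubgroup.zsmul_mem _ hk₁mem _
  have hqN' : q ∈ N' := hk₂mem
  have hqpos : ∀ j : b, 0 < B.repr q j := by
    intro j
    have hzj := hzpos j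
    have : B.repr q j = (k₂ : ℝ) * ((k₁ : ℝ) * B.repr z j) := by
      simp [q, map_zsmul, zsmul_eq_mul]
    rw [this]
    positivity
  -- translation property
  have hP : ∀ x : V, ∃ n : ℕ, x + (n : ℕ) • q ∈ K := by
    intro x
    obtain ⟨n, hn⟩ := exists_nat_gt (∑ j : b, |B.repr x j| / B.repr q j)
    refine ⟨n, hmemK _ ?_⟩
    intro j
    have hqj := hqpos j
    have h1 : |B.repr x j| / B.repr q j ≤ ∑ j' : b, |B.repr x j'| / B.repr q j' :=
      Finset.single_le_sum (f := fun j' : b => |B.repr x j'| / B.repr q j')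
        (fun j' _ => div_nonneg (abs_nonneg _) (hqpos j').le) (Finset.mem_univ j)
    have h3 : |B.repr x j| < n * B.repr q j := (div_lt_iff₀ hqj).mp (lt_of_le_of_lt h1 hn)
    have hrw : B.repr (x + (n:ℕ) • q) j = B.repr x j + (n:ℝ) * B.repr q j := by
      simp [map_add, map_nsmul, nsmul_eq_mul]
    rw [hrw]
    nlinarith [neg_abs_le (B.repr x j)]
  -- K ∩ Lc i ⊆ N'
  have hKLc : ∀ x, x ∈ K → x ∈ Lc i → x ∈ N' := by
    intro x hxK hxLc
    have hxS : x ∈ S := by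
      rw [hSdef]
      exact Set.mem_iUnion.mpr ⟨i, hxK.2, hxLc⟩
    have hmem : x ∈ σ0 ∩ (N' : Set V) := by rw [hmatch]; exact ⟨hxK.1, hxS⟩
    exact hmem.2
  -- K ∩ N' ⊆ Lc i
  have hKN' : ∀ x, x ∈ K → x ∈ N' → x ∈ Lc i := by
    intro x hxK hxN'
    have hxS : x ∈ S := by
      have : x ∈ σ0 ∩ S := by rw [← hmatch]; exact ⟨hxK.1, hxN'⟩
      exact this.2
    rw [hSdef] at hxS
    obtain ⟨j, hxj⟩ := Set.mem_iUnion.mp hxS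
    obtain ⟨hxcj, hxLcj⟩ := hxj
    obtain ⟨i', hi'⟩ := hfaces i _ (hmeet i j).1
    have hf1 : IsFace (c i') (c j) := by rw [hi']; exact (hmeet i j).2
    have hf2 : IsFace (c i') (c i) := by rw [hi']; exact (hmeet i j).1
    have hx' : x ∈ c i' := by rw [hi']; exact ⟨hxK.2, hxcj⟩
    have hxi' : x ∈ (Lc i' : Set V) := by
      rw [← hlatface i' j hf1]
      exact ⟨hxLcj, Submodule.subset_span hx'⟩
    rw [← hlatface i' i hf2] at hxi'
    exact hxi'.1
  -- conclude
  ext x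
  constructor
  · intro hx
    obtain ⟨n, hn⟩ := hP x
    have hsum : x + n • q ∈ Lc i := AddSubgroup.add_mem _ hx (AddSubgroup.nsmul_mem _ hqLc n)
    have h1 : x + n • q ∈ N' := hKLc _ hn hsum
    have h2 : (n : ℕ) • q ∈ N' := AddSubgroup.nsmul_mem _ hqN' n
    simpa using AddSubgroup.sub_mem _ h1 h2
  · intro hx
    obtain ⟨n, hn⟩ := hP x
    have hsum : x + n • q ∈ N' := AddSubgroup.add_mem _ hx (AddSubgroup.nsmul_mem _ hqN' n)
    have h1 : x + n • q ∈ Lc i := hKN' _ hn hsum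
    have h2 : (n : ℕ) • q ∈ Lc i := AddSubgroup.nsmul_mem _ hqLc n
    simpa using AddSubgroup.sub_mem _ h1 h2
end
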